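/- For every H ∈ (0, 1/2] and every x ∈ [0,1], one has R_H(x) ≥ (1 − x^{2H})·x² ≥ 2H·x²·(1−x), where R_H(x) = 1 − 2Hx − (1−x)^{2H}(1−x²) + 2Hx^{2H+1} − x^{2+2H}. -/

import Mathlib

/-!
Both inequalities come from Bernoulli's inequality `(1 + s)^p ≤ 1 + p s` for `p = 2H ∈ (0, 1]`.
With `s = x - 1` it gives `1 - x^{2H} ≥ 2H (1 - x)`. With `s = -x`, inserted in the identity
`R_H(x) - (1 - x^{2H}) x² = (1 - x²)(1 - (1 - x)^{2H}) - 2Hx (1 - x^{2H})`, it bounds the difference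
below by `2Hx (x^{2H} - x²)`, which is nonnegative on `[0, 1]` because `2H ≤ 2`.
-/

/-- The function `R_H` of formula (21). -/
noncomputable def RH (H x : ℝ) : ℝ :=
  1 - 2*H*x - (1-x) ^ (2*H) * (1 - x^2) + 2*H*x ^ (2*H+1) - x ^ (2+2*H)

open Real

lemma RH_sub_one_sub_rpow_mul_sq {H x : ℝ} (hH : 0 ≤ H) (hx : 0 ≤ x) :
    RH H x - (1 - x ^ (2*H)) * x^2 =
      (1 - x^2) * (1 - (1 - x) ^ (2*H)) - 2*H*x * (1 - x ^ (2*H)) := by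
  have hodd : x ^ (2*H + 1) = x ^ (2*H) * x := by
    rw [rpow_add' hx (by linarith), rpow_one]
  have heven : x ^ (2 + 2*H) = x^2 * x ^ (2*H) := by
    rw [rpow_add' hx (by linarith), rpow_two]
  rw [RH, hodd, heven]
  ring

lemma mul_sub_le_one_sub_rpow {p x : ℝ} (hp0 : 0 ≤ p) (hp1 : p ≤ 1) (hx : 0 ≤ x) :
    p * (1 - x) ≤ 1 - x ^ p := by
  have := rpow_one_add_le_one_add_mul_self (s := x - 1) (by linarith) hp0 hp1
  rw [add_sub_cancel] at this
  linarith

/-- from expansion (24): for `H ∈ (0, 1/2]` and `x ∈ [0,1]`,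
`R_H(x) ≥ (1 − x^{2H}) x² ≥ 2H x² (1−x)`. -/
theorem statement8 (H x : ℝ) (hH : H ∈ Set.Ioc (0:ℝ) (1/2)) (hx : x ∈ Set.Icc (0:ℝ) 1) :
    (1 - x ^ (2*H)) * x^2 ≤ RH H x ∧ 2*H*x^2*(1 - x) ≤ (1 - x ^ (2*H)) * x^2 := by
  obtain ⟨hH0, hH1⟩ := hH
  obtain ⟨hx0, hx1⟩ := hx
  have hp0 : 0 ≤ 2*H := by linarith
  have hp1 : 2*H ≤ 1 := by linarith
  refine ⟨?_, ?_⟩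
  · have hbern : 2*H*x ≤ 1 - (1 - x) ^ (2*H) := by
      simpa using mul_sub_le_one_sub_rpow hp0 hp1 (sub_nonneg.2 hx1)
    have hsq : x ^ (2:ℝ) ≤ x ^ (2*H) := rpow_le_rpow_of_exponent_ge' hx0 hx1 hp0 (by linarith)
    rw [rpow_two] at hsq
    have hx2 : 0 ≤ 1 - x^2 := by nlinarith
    rw [← sub_nonneg, RH_sub_one_sub_rpow_mul_sq hH0.le hx0]
    calc 0 ≤ 2*H*x * (x ^ (2*H) - x^2) := by have := sub_nonneg.2 hsq; positivity
      _ = (1 - x^2) * (2*H*x) - 2*H*x * (1 - x ^ (2*H)) := by ring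
      _ ≤ (1 - x^2) * (1 - (1 - x) ^ (2*H)) - 2*H*x * (1 - x ^ (2*H)) := by gcongr
  · calc 2*H*x^2*(1 - x) = 2*H*(1 - x) * x^2 := by ring
      _ ≤ (1 - x ^ (2*H)) * x^2 := by gcongr; exact mul_sub_le_one_sub_rpow hp0 hp1 hx0
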